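/- arXiv:1411.3195 — 6 statements merged into one kernel-verified Lean document; each statement's English description precedes it below -/
import Mathlib

section
/- Let 0 ≤ zmin < zmax. Let x₁, x₂, y₁, y₂ ≥ 0 be reals and x₃, y₃ : [zmin, zmax] → ℝ be nonnegative integrable functions, and set x̂ := x₁ + x₂ + ∫_{zmin}^{zmax} x₃(u) du and ŷ := y₁ + y₂ + ∫_{zmin}^{zmax} y₃(u) du. If x̂ > 0 and ŷ > 0, then | x₁ x₂ / x̂² − y₁ y₂ / ŷ² | ≤ (3/ŷ) · ( |x₁ − y₁| + |x₂ − y₂| + ∫_{zmin}^{zmax} |x₃(u) − y₃(u)| du ). -/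
/-!
With `X = x₁ + x₂ + ∫ x₃` and `Y = y₁ + y₂ + ∫ y₃`, write
`x₁x₂/X² − y₁y₂/Y² = (x₂/X)(x₁/X − y₁/Y) + (y₁/Y)(x₂/X − y₂/Y)`.
On the nonnegative cone the weights `x₂/X`, `y₁/Y` lie in `[0, 1]`, and each difference of
ratios is at most `(|X − Y| + |xᵢ − yᵢ|)/Y`. Since `|X − Y|` is itself bounded by
`‖x − y‖`, this gives the constant `3`.
-/

open Set MeasureTheory intervalIntegral

lemma abs_div_sub_div_le {X Y u v : ℝ} (hX : 0 < X) (hY : 0 < Y) (hu : 0 ≤ u) (huX : u ≤ X) :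
    |u / X - v / Y| ≤ (|X - Y| + |u - v|) / Y := by
  have hXY := mul_pos hX hY
  have hsplit : u / X - v / Y = (u * (Y - X) + X * (u - v)) / (X * Y) := by
    field_simp
    ring
  have hnum : |u * (Y - X) + X * (u - v)| ≤ u * |X - Y| + X * |u - v| := by
    calc |u * (Y - X) + X * (u - v)| ≤ |u * (Y - X)| + |X * (u - v)| := abs_add_le _ _
      _ = u * |X - Y| + X * |u - v| := by
        rw [abs_mul, abs_mul, abs_of_nonneg hu, abs_of_pos hX, abs_sub_comm Y]
  rw [hsplit, abs_div, abs_of_pos hXY, div_le_div_iff₀ hXY hY]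
  nlinarith [mul_nonneg (mul_nonneg hY.le (abs_nonneg (X - Y))) (sub_nonneg.2 huX)]

lemma abs_mul_div_sq_sub_mul_div_sq_le {x₁ x₂ y₁ y₂ X Y : ℝ} (hX : 0 < X) (hY : 0 < Y)
    (hx₁ : 0 ≤ x₁) (hx₂ : 0 ≤ x₂) (hy₁ : 0 ≤ y₁)
    (hx₁X : x₁ ≤ X) (hx₂X : x₂ ≤ X) (hy₁Y : y₁ ≤ Y) :
    |x₁ * x₂ / X ^ 2 - y₁ * y₂ / Y ^ 2| ≤ (2 * |X - Y| + |x₁ - y₁| + |x₂ - y₂|) / Y := by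
  have hsplit : x₁ * x₂ / X ^ 2 - y₁ * y₂ / Y ^ 2
      = x₂ / X * (x₁ / X - y₁ / Y) + y₁ / Y * (x₂ / X - y₂ / Y) := by
    field_simp
    ring
  have hx₂X' : 0 ≤ x₂ / X := div_nonneg hx₂ hX.le
  have hy₁Y' : 0 ≤ y₁ / Y := div_nonneg hy₁ hY.le
  calc |x₁ * x₂ / X ^ 2 - y₁ * y₂ / Y ^ 2|
      ≤ x₂ / X * |x₁ / X - y₁ / Y| + y₁ / Y * |x₂ / X - y₂ / Y| := by
        rw [hsplit, ← abs_of_nonneg hx₂X', ← abs_of_nonneg hy₁Y', ← abs_mul, ← abs_mul,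
          abs_of_nonneg hx₂X', abs_of_nonneg hy₁Y']
        exact abs_add_le _ _
    _ ≤ 1 * ((|X - Y| + |x₁ - y₁|) / Y) + 1 * ((|X - Y| + |x₂ - y₂|) / Y) := by
        gcongr
        · exact (div_le_one hX).2 hx₂X
        · exact abs_div_sub_div_le hX hY hx₁ hx₁X
        · exact (div_le_one hY).2 hy₁Y
        · exact abs_div_sub_div_le hX hY hx₂ hx₂X
    _ = (2 * |X - Y| + |x₁ - y₁| + |x₂ - y₂|) / Y := by ring

lemma abs_mul_div_sq_sub_mul_div_sq_le_three_div {x₁ x₂ s y₁ y₂ t : ℝ}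
    (hx₁ : 0 ≤ x₁) (hx₂ : 0 ≤ x₂) (hs : 0 ≤ s) (hy₁ : 0 ≤ y₁) (hy₂ : 0 ≤ y₂) (ht : 0 ≤ t)
    (hX : 0 < x₁ + x₂ + s) (hY : 0 < y₁ + y₂ + t) :
    |x₁ * x₂ / (x₁ + x₂ + s) ^ 2 - y₁ * y₂ / (y₁ + y₂ + t) ^ 2|
      ≤ 3 / (y₁ + y₂ + t) * (|x₁ - y₁| + |x₂ - y₂| + |s - t|) := by
  have hXY : |(x₁ + x₂ + s) - (y₁ + y₂ + t)| ≤ |x₁ - y₁| + |x₂ - y₂| + |s - t| := by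
    calc |(x₁ + x₂ + s) - (y₁ + y₂ + t)| = |(x₁ - y₁) + (x₂ - y₂) + (s - t)| := by ring_nf
      _ ≤ |x₁ - y₁| + |x₂ - y₂| + |s - t| := abs_add_three _ _ _
  calc _ ≤ (2 * |(x₁ + x₂ + s) - (y₁ + y₂ + t)| + |x₁ - y₁| + |x₂ - y₂|) / (y₁ + y₂ + t) :=
        abs_mul_div_sq_sub_mul_div_sq_le hX hY hx₁ hx₂ hy₁ (by linarith) (by linarith)
          (by linarith)
    _ ≤ 3 * (|x₁ - y₁| + |x₂ - y₂| + |s - t|) / (y₁ + y₂ + t) := by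
        gcongr
        linarith [abs_nonneg (s - t)]
    _ = _ := by ring

lemma abs_integral_sub_integral_le {f g : ℝ → ℝ} {a b : ℝ} (hab : a ≤ b)
    (hf : IntegrableOn f (Icc a b)) (hg : IntegrableOn g (Icc a b)) :
    |(∫ u in a..b, f u) - ∫ u in a..b, g u| ≤ ∫ u in a..b, |f u - g u| := by
  rw [← integral_sub ((intervalIntegrable_iff_integrableOn_Icc_of_le hab).2 hf)
    ((intervalIntegrable_iff_integrableOn_Icc_of_le hab).2 hg)]
  exact abs_integral_le_integral_abs hab

theorem stmt4_general (zmin zmax : ℝ) (hzz : zmin < zmax)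
    (x₁ x₂ y₁ y₂ : ℝ) (hx₁ : 0 ≤ x₁) (hx₂ : 0 ≤ x₂) (hy₁ : 0 ≤ y₁) (hy₂ : 0 ≤ y₂)
    (x₃ y₃ : ℝ → ℝ)
    (hx₃ : ∀ u ∈ Icc zmin zmax, 0 ≤ x₃ u) (hy₃ : ∀ u ∈ Icc zmin zmax, 0 ≤ y₃ u)
    (hx₃i : IntegrableOn x₃ (Icc zmin zmax)) (hy₃i : IntegrableOn y₃ (Icc zmin zmax))
    (hxhat : 0 < x₁ + x₂ + ∫ u in zmin..zmax, x₃ u)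
    (hyhat : 0 < y₁ + y₂ + ∫ u in zmin..zmax, y₃ u) :
    |x₁ * x₂ / (x₁ + x₂ + ∫ u in zmin..zmax, x₃ u) ^ 2
        - y₁ * y₂ / (y₁ + y₂ + ∫ u in zmin..zmax, y₃ u) ^ 2|
      ≤ (3 / (y₁ + y₂ + ∫ u in zmin..zmax, y₃ u))
        * (|x₁ - y₁| + |x₂ - y₂| + ∫ u in zmin..zmax, |x₃ u - y₃ u|) := by
  have hx₃int : 0 ≤ ∫ u in zmin..zmax, x₃ u := integral_nonneg hzz.le hx₃
  have hy₃int : 0 ≤ ∫ u in zmin..zmax, y₃ u := integral_nonneg hzz.le hy₃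
  refine (abs_mul_div_sq_sub_mul_div_sq_le_three_div hx₁ hx₂ hx₃int hy₁ hy₂ hy₃int
    hxhat hyhat).trans ?_
  gcongr
  exact abs_integral_sub_integral_le hzz.le hx₃i hy₃i

/-- Lipschitz-type estimate for the incidence term on the nonnegative cone of
`X = ℝ × ℝ × L¹([zmin,zmax]; ℝ)`:
`| x₁x₂/x̂² − y₁y₂/ŷ² | ≤ (3/ŷ) ‖x − y‖`. -/
theorem stmt4 (zmin zmax : ℝ) (hzmin : 0 ≤ zmin) (hzz : zmin < zmax)
    (x₁ x₂ y₁ y₂ : ℝ) (hx₁ : 0 ≤ x₁) (hx₂ : 0 ≤ x₂) (hy₁ : 0 ≤ y₁) (hy₂ : 0 ≤ y₂)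
    (x₃ y₃ : ℝ → ℝ)
    (hx₃ : ∀ u ∈ Icc zmin zmax, 0 ≤ x₃ u) (hy₃ : ∀ u ∈ Icc zmin zmax, 0 ≤ y₃ u)
    (hx₃i : IntegrableOn x₃ (Icc zmin zmax)) (hy₃i : IntegrableOn y₃ (Icc zmin zmax))
    (hxhat : 0 < x₁ + x₂ + ∫ u in zmin..zmax, x₃ u)
    (hyhat : 0 < y₁ + y₂ + ∫ u in zmin..zmax, y₃ u) :
    |x₁ * x₂ / (x₁ + x₂ + ∫ u in zmin..zmax, x₃ u) ^ 2
        - y₁ * y₂ / (y₁ + y₂ + ∫ u in zmin..zmax, y₃ u) ^ 2|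
      ≤ (3 / (y₁ + y₂ + ∫ u in zmin..zmax, y₃ u))
        * (|x₁ - y₁| + |x₂ - y₂| + ∫ u in zmin..zmax, |x₃ u - y₃ u|) :=
  stmt4_general zmin zmax hzz x₁ x₂ y₁ y₂ hx₁ hx₂ hy₁ hy₂ x₃ y₃ hx₃ hy₃ hx₃i hy₃i hxhat hyhat
end

section
/- Let β ≥ 0, γ ≥ 0, d ≥ 0, d_I ≥ 0 with q := γ + d + d_I − β > 0. Let S, I, N : [0,∞) → ℝ with N(t) > 0 and 0 ≤ S(t) ≤ N(t) for all t ≥ 0, let I be differentiable with I(0) ≥ 0 and I'(t) = β S(t) I(t) / N(t) − (γ + d + d_I) I(t) for all t ≥ 0. Then 0 ≤ I(t) ≤ I(0) e^{−q t} for all t ≥ 0; in particular I(t) → 0 as t → ∞. -/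
open Set Filter Real

/-!
Multiplying by `e^{q t}` turns the equation into `f' = (β S / N - β) f` for `f = I e^{q t}`,
with a coefficient in `[-β, 0]`. A function whose derivative is nonnegative wherever the function
is negative cannot become negative, so `f ≥ 0`; then `f' ≤ 0`, so `f` decreases and
`0 ≤ I(t) e^{q t} ≤ I(0)`.
-/

theorem nonneg_of_hasDerivAt_of_deriv_nonneg_of_neg {f f' : ℝ → ℝ} {a : ℝ}
    (hf : ∀ t ∈ Ici a, HasDerivAt f (f' t) t) (hf' : ∀ t ∈ Ici a, f t < 0 → 0 ≤ f' t)
    (ha : 0 ≤ f a) : ∀ t ∈ Ici a, 0 ≤ f t := by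
  intro t₁ ht₁
  by_contra! hneg
  have hcont : ContinuousOn f (Icc a t₁) := fun t ht ↦
    (hf t ht.1).continuousAt.continuousWithinAt
  -- `t₀` is the last time in `[a, t₁]` at which `f` is nonnegative; `f` increases on `[t₀, t₁]`.
  set A := Icc a t₁ ∩ f ⁻¹' Ici 0
  have hA_bdd : BddAbove A := bddAbove_Icc.mono inter_subset_left
  have hA : sSup A ∈ A :=
    (hcont.preimage_isClosed_of_isClosed isClosed_Icc isClosed_Ici).csSup_mem
      ⟨a, ⟨le_rfl, ht₁⟩, ha⟩ hA_bdd
  set t₀ := sSup A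
  obtain ⟨⟨hat₀, ht₀t₁⟩, hft₀⟩ := hA
  have hneg_after : ∀ t ∈ Ioc t₀ t₁, f t < 0 := fun t ht ↦ by
    by_contra! hft
    exact (le_csSup hA_bdd ⟨⟨hat₀.trans ht.1.le, ht.2⟩, hft⟩).not_gt ht.1
  have hmono : MonotoneOn f (Icc t₀ t₁) := by
    refine monotoneOn_of_hasDerivWithinAt_nonneg (f' := f') (convex_Icc _ _)
      (hcont.mono (Icc_subset_Icc_left hat₀)) (fun t ht ↦ ?_) (fun t ht ↦ ?_)
    all_goals rw [interior_Icc] at ht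
    · exact (hf t (hat₀.trans ht.1.le)).hasDerivWithinAt
    · exact hf' t (hat₀.trans ht.1.le) (hneg_after t (Ioo_subset_Ioc_self ht))
  have hft₀_le : f t₀ ≤ f t₁ := hmono (left_mem_Icc.2 ht₀t₁) (right_mem_Icc.2 ht₀t₁) ht₀t₁
  exact (hft₀.trans hft₀_le).not_gt hneg

theorem mem_Icc_of_hasDerivAt_eq_mul_of_nonpos {f g : ℝ → ℝ} {a : ℝ}
    (hf : ∀ t ∈ Ici a, HasDerivAt f (g t * f t) t) (hg : ∀ t ∈ Ici a, g t ≤ 0) (ha : 0 ≤ f a) :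
    ∀ t ∈ Ici a, f t ∈ Icc 0 (f a) := by
  have hnonneg : ∀ t ∈ Ici a, 0 ≤ f t := nonneg_of_hasDerivAt_of_deriv_nonneg_of_neg hf
    (fun t ht hft ↦ mul_nonneg_of_nonpos_of_nonpos (hg t ht) hft.le) ha
  have hanti : AntitoneOn f (Ici a) := by
    refine antitoneOn_of_hasDerivWithinAt_nonpos (f' := fun t ↦ g t * f t) (convex_Ici a)
      (fun t ht ↦ (hf t ht).continuousAt.continuousWithinAt) (fun t ht ↦ ?_) (fun t ht ↦ ?_)
    all_goals rw [interior_Ici] at ht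
    · exact (hf t (Ioi_subset_Ici_self ht)).hasDerivWithinAt
    · exact mul_nonpos_of_nonpos_of_nonneg (hg t (Ioi_subset_Ici_self ht))
        (hnonneg t (Ioi_subset_Ici_self ht))
  exact fun t ht ↦ ⟨hnonneg t ht, hanti self_mem_Ici ht ht⟩

theorem stmt5_general (β γ d dI : ℝ) (hβ : 0 ≤ β)
    (hq : 0 < γ + d + dI - β)
    (S I N : ℝ → ℝ)
    (hN : ∀ t, 0 ≤ t → 0 < N t)
    (hS : ∀ t, 0 ≤ t → 0 ≤ S t ∧ S t ≤ N t)
    (hI0 : 0 ≤ I 0)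
    (hI : ∀ t, 0 ≤ t →
      HasDerivAt I (β * S t * I t / N t - (γ + d + dI) * I t) t) :
    (∀ t, 0 ≤ t → 0 ≤ I t ∧ I t ≤ I 0 * Real.exp (-(γ + d + dI - β) * t)) ∧
      Tendsto I atTop (nhds 0) := by
  set q := γ + d + dI - β
  have hf : ∀ t ∈ Ici 0, HasDerivAt (fun t ↦ I t * exp (q * t))
      ((β * S t / N t - β) * (I t * exp (q * t))) t := fun t ht ↦
    ((hI t ht).mul ((hasDerivAt_id t).const_mul q).exp).congr_deriv (by simp only [q, id]; ring)
  have hg : ∀ t ∈ Ici 0, β * S t / N t - β ≤ 0 := fun t ht ↦ by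
    rw [sub_nonpos, div_le_iff₀ (hN t ht)]
    exact mul_le_mul_of_nonneg_left (hS t ht).2 hβ
  have hbound (t : ℝ) (ht : 0 ≤ t) : 0 ≤ I t ∧ I t ≤ I 0 * exp (-q * t) := by
    obtain ⟨hlow, hup⟩ := mem_Icc_of_hasDerivAt_eq_mul_of_nonpos hf hg (by simpa using hI0) t ht
    have hexp := exp_pos (q * t)
    simp only [mul_zero, exp_zero, mul_one] at hup
    rw [neg_mul, exp_neg, ← div_eq_mul_inv, le_div_iff₀ hexp]
    exact ⟨nonneg_of_mul_nonneg_left hlow hexp, hup⟩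
  have hdecay : Tendsto (fun t ↦ I 0 * exp (-q * t)) atTop (nhds 0) := by
    simpa using (tendsto_exp_atBot.comp
      (tendsto_id.const_mul_atTop_of_neg (neg_lt_zero.2 hq))).const_mul (I 0)
  refine ⟨hbound, tendsto_of_tendsto_of_tendsto_of_le_of_le' tendsto_const_nhds hdecay ?_ ?_⟩
  · filter_upwards [eventually_ge_atTop 0] with t ht using (hbound t ht).1
  · filter_upwards [eventually_ge_atTop 0] with t ht using (hbound t ht).2

/-- If `q = γ + d + d_I − β > 0` (i.e. `R₀ < 1`), then the infective population
satisfying `I' = β S I / N − (γ+d+d_I) I` with `0 ≤ S ≤ N` decays: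
`0 ≤ I(t) ≤ I(0) e^{−q t}`, and in particular `I(t) → 0` as `t → ∞`. -/
theorem stmt5 (β γ d dI : ℝ) (hβ : 0 ≤ β) (hγ : 0 ≤ γ) (hd : 0 ≤ d) (hdI : 0 ≤ dI)
    (hq : 0 < γ + d + dI - β)
    (S I N : ℝ → ℝ)
    (hN : ∀ t, 0 ≤ t → 0 < N t)
    (hS : ∀ t, 0 ≤ t → 0 ≤ S t ∧ S t ≤ N t)
    (hI0 : 0 ≤ I 0)
    (hI : ∀ t, 0 ≤ t →
      HasDerivAt I (β * S t * I t / N t - (γ + d + dI) * I t) t) :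
    (∀ t, 0 ≤ t → 0 ≤ I t ∧ I t ≤ I 0 * Real.exp (-(γ + d + dI - β) * t)) ∧
      Tendsto I atTop (nhds 0) :=
  stmt5_general β γ d dI hβ hq S I N hN hS hI0 hI
end

section
/- Let d > 0, let b : [0,∞) → [0, b₊] (0 < b₊ < ∞) be C¹ with b(0) = 0, and suppose there exists N* > 0 such that b(N) > dN for N ∈ (0, N*) and b(N) < dN for N > N*. Let 0 ≤ zmin < zmax and g : [zmin, zmax] → ℝ be C¹ with g > 0. Suppose S* ≥ 0 and r̄ : [zmin, zmax] → ℝ are such that (S*, r̄) ≠ (0, 0), z ↦ g(z) r̄(z) is differentiable with (g r̄)'(z) = d r̄(z) for all z, g(zmax) r̄(zmax) = 0, and 0 = b(N*ₑ) − d S* + g(zmin) r̄(zmin), where N*ₑ := S* + ∫_{zmin}^{zmax} r̄(z) dz. Then r̄ ≡ 0 on [zmin, zmax] and S* = N*ₑ = N*. In particular, the disease-free equilibrium is unique and equals (N*, 0, 0). -/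
/-!
Put `u = g r̄`. The stationary equation `u' = d r̄` together with `g > 0` gives
`u u' = d g r̄² ≥ 0`, so `u²` is nondecreasing on `[zmin, zmax]`; since `u(zmax) = 0`, `u`
and hence `r̄` vanish identically. The balance equation then reduces to `b(S*) = d S*` with
`S* > 0`, and the sign conditions on `b(N) - dN` leave only `S* = N*`.
-/

open Set MeasureTheory intervalIntegral

theorem eqOn_zero_of_mul_deriv_nonneg_of_right_eq_zero {u u' : ℝ → ℝ} {a b : ℝ}
    (hu : ∀ x ∈ Icc a b, HasDerivWithinAt u (u' x) (Icc a b) x)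
    (hsign : ∀ x ∈ Icc a b, 0 ≤ u x * u' x) (hb : u b = 0) :
    EqOn u 0 (Icc a b) := by
  have hsq : MonotoneOn (fun x => u x ^ 2) (Icc a b) := by
    refine monotoneOn_of_hasDerivWithinAt_nonneg (convex_Icc a b)
      (fun x hx => ((hu x hx).continuousWithinAt).pow 2) (f' := fun x => 2 * u x * u' x)
      (fun x hx => ?_) (fun x hx => ?_)
    · simpa using ((hu x (interior_subset hx)).fun_pow 2).mono interior_subset
    · nlinarith [hsign x (interior_subset hx)]
  intro x hx
  have hxb : u x ^ 2 ≤ u b ^ 2 := hsq hx (right_mem_Icc.2 (hx.1.trans hx.2)) hx.2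
  rw [hb] at hxb
  simpa using hxb

theorem eqOn_zero_of_hasDerivWithinAt_mul_eq_const_mul {d a b : ℝ} {g r : ℝ → ℝ} (hd : 0 ≤ d)
    (hg : ∀ z ∈ Icc a b, 0 < g z)
    (hode : ∀ z ∈ Icc a b, HasDerivWithinAt (fun w => g w * r w) (d * r z) (Icc a b) z)
    (hb : g b * r b = 0) :
    EqOn r 0 (Icc a b) := by
  have hsign : ∀ z ∈ Icc a b, 0 ≤ g z * r z * (d * r z) := fun z hz =>
    calc 0 ≤ d * g z * r z ^ 2 := by have := (hg z hz).le; positivity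
      _ = g z * r z * (d * r z) := by ring
  have hu := eqOn_zero_of_mul_deriv_nonneg_of_right_eq_zero hode hsign hb
  intro z hz
  exact (mul_eq_zero.1 (hu hz)).resolve_left (hg z hz).ne'

theorem eq_of_apply_eq_mul_of_sign_change {b : ℝ → ℝ} {d Nstar S : ℝ}
    (hlow : ∀ N : ℝ, 0 < N → N < Nstar → d * N < b N)
    (hhigh : ∀ N : ℝ, Nstar < N → b N < d * N) (hS : 0 < S) (hbS : b S = d * S) :
    S = Nstar := by
  rcases lt_trichotomy S Nstar with h | h | h
  · linarith [hlow S hS h]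
  · exact h
  · linarith [hhigh S h]

theorem stmt9_general (d : ℝ) (hd : 0 < d)
    (b : ℝ → ℝ)
    (Nstar : ℝ)
    (hlow : ∀ N : ℝ, 0 < N → N < Nstar → d * N < b N)
    (hhigh : ∀ N : ℝ, Nstar < N → b N < d * N)
    (zmin zmax : ℝ) (hzz : zmin < zmax)
    (g : ℝ → ℝ)
    (hgpos : ∀ z ∈ Icc zmin zmax, 0 < g z)
    (Sstar : ℝ) (hSstar : 0 ≤ Sstar) (rbar : ℝ → ℝ)
    (hnontriv : ¬ (Sstar = 0 ∧ ∀ z ∈ Icc zmin zmax, rbar z = 0))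
    (hode : ∀ z ∈ Icc zmin zmax,
      HasDerivWithinAt (fun w => g w * rbar w) (d * rbar z) (Icc zmin zmax) z)
    (hbc : g zmax * rbar zmax = 0)
    (heq : 0 = b (Sstar + ∫ z in zmin..zmax, rbar z) - d * Sstar
      + g zmin * rbar zmin) :
    (∀ z ∈ Icc zmin zmax, rbar z = 0)
      ∧ Sstar = Sstar + ∫ z in zmin..zmax, rbar z
      ∧ Sstar + (∫ z in zmin..zmax, rbar z) = Nstar := by
  have hr0 : ∀ z ∈ Icc zmin zmax, rbar z = 0 :=
    eqOn_zero_of_hasDerivWithinAt_mul_eq_const_mul hd.le hgpos hode hbc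
  have hint : ∫ z in zmin..zmax, rbar z = 0 := by
    rw [integral_congr (g := fun _ => (0 : ℝ)) fun z hz => hr0 z (uIcc_of_le hzz.le ▸ hz)]
    exact integral_zero
  have hSpos : 0 < Sstar := hSstar.lt_of_ne fun h => hnontriv ⟨h.symm, hr0⟩
  have hbS : b Sstar = d * Sstar := by
    rw [hint, add_zero, hr0 zmin (left_mem_Icc.2 hzz.le), mul_zero] at heq
    linarith
  rw [hint, add_zero]
  exact ⟨hr0, rfl, eq_of_apply_eq_mul_of_sign_change hlow hhigh hSpos hbS⟩

/-- Existence and uniqueness of the disease-free equilibrium: any stationary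
disease-free solution `(S*, r̄) ≠ (0, 0)` of model (M1) satisfies `r̄ ≡ 0` and
`S* = N*ₑ = N*`, i.e. the DFE is `(N*, 0, 0)`. -/
theorem stmt9 (d bplus : ℝ) (hd : 0 < d) (hbplus : 0 < bplus)
    (b : ℝ → ℝ) (hbC : ContDiffOn ℝ 1 b (Ici 0))
    (hbrange : ∀ N : ℝ, 0 ≤ N → b N ∈ Icc 0 bplus) (hb0 : b 0 = 0)
    (Nstar : ℝ) (hNstar : 0 < Nstar)
    (hlow : ∀ N : ℝ, 0 < N → N < Nstar → d * N < b N)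
    (hhigh : ∀ N : ℝ, Nstar < N → b N < d * N)
    (zmin zmax : ℝ) (hzmin : 0 ≤ zmin) (hzz : zmin < zmax)
    (g : ℝ → ℝ) (hg : ContDiffOn ℝ 1 g (Icc zmin zmax))
    (hgpos : ∀ z ∈ Icc zmin zmax, 0 < g z)
    (Sstar : ℝ) (hSstar : 0 ≤ Sstar) (rbar : ℝ → ℝ)
    (hnontriv : ¬ (Sstar = 0 ∧ ∀ z ∈ Icc zmin zmax, rbar z = 0))
    (hode : ∀ z ∈ Icc zmin zmax,
      HasDerivWithinAt (fun w => g w * rbar w) (d * rbar z) (Icc zmin zmax) z)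
    (hbc : g zmax * rbar zmax = 0)
    (heq : 0 = b (Sstar + ∫ z in zmin..zmax, rbar z) - d * Sstar
      + g zmin * rbar zmin) :
    (∀ z ∈ Icc zmin zmax, rbar z = 0)
      ∧ Sstar = Sstar + ∫ z in zmin..zmax, rbar z
      ∧ Sstar + (∫ z in zmin..zmax, rbar z) = Nstar :=
  stmt9_general d hd b Nstar hlow hhigh zmin zmax hzz g hgpos Sstar hSstar rbar hnontriv hode hbc
    heq
end

section
/- Let d > 0, β ≥ 0, γ ≥ 0, d_I ≥ 0 with β < γ + d (i.e. R̃₀ := β/(γ+d) < 1). Let b : [0,∞) → [0, b₊] be C¹ with b(0) = 0, b'(0) > d, and suppose there exists N* > 0 such that b(N) > dN for N ∈ (0, N*) and b(N) < dN for N > N*. Let S, I, R : [0,∞) → ℝ be differentiable with S(t) ≥ 0, I(t) ≥ 0, R(t) ≥ 0 and N(t) := S(t) + I(t) + R(t) > 0 for all t ≥ 0, with I(0) > 0, and suppose for all t ≥ 0: I'(t) = β S(t) I(t)/N(t) − (γ + d + d_I) I(t), R'(t) ≤ γ I(t) − d R(t), and N'(t) = b(N(t)) − d N(t) − d_I I(t).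 Then I(t) → 0, R(t) → 0 and S(t) → N* as t → ∞. -/
/-!
Because `S ≤ N`, the incidence is at most `β I`, so `I' ≤ -(γ + d + dI - β) I` and `I → 0`;
then `R' ≤ γ I - d R` forces `R → 0`. For the total population, `N' ≤ b N - d N`, and since `N`
is eventually bounded (`b ≤ b₊`) compactness gives a uniform downward drift above any level
`a > N*`. Below `N*` the loss term `-dI I` is absorbed by passing to `P = N - (dI / k) I` with
`k = γ + d + dI - β`: it satisfies `P' ≥ b N - d N` and differs from `N` by a vanishing amount,
so it first stays away from `0` and is then trapped above every level `a < N*`.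
All limits come from one trapping principle: a function whose derivative is at least `c > 0`
whenever it lies below `a` eventually stays above `a`.
-/

open Set Filter Topology

theorem tendsto_nhds_of_forall_eventually_le_ge {α β : Type*} [LinearOrder α] [DenselyOrdered α]
    [TopologicalSpace α] [OrderTopology α] {f : β → α} {l : Filter β} {L : α}
    (hlo : ∀ a < L, ∀ᶠ x in l, a ≤ f x) (hhi : ∀ a > L, ∀ᶠ x in l, f x ≤ a) :
    Tendsto f l (𝓝 L) := by
  refine tendsto_order.2 ⟨fun a ha => ?_, fun a ha => ?_⟩
  · obtain ⟨c, hac, hcL⟩ := exists_between ha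
    exact (hlo c hcL).mono fun x hx => hac.trans_le hx
  · obtain ⟨c, hLc, hca⟩ := exists_between ha
    exact (hhi c hLc).mono fun x hx => hx.trans_lt hca

section Trapping

variable {u u' : ℝ → ℝ} {a c T : ℝ}

theorem exists_ge_of_deriv_ge_pos (hc : 0 < c) (hu : ∀ t ≥ T, HasDerivAt u (u' t) t)
    (h : ∀ t ≥ T, u t ≤ a → c ≤ u' t) : ∃ t ≥ T, a ≤ u t := by
  by_contra! hlt
  set t := T + (a - u T) / c + 1
  have hTt : T ≤ t := by
    have : 0 ≤ (a - u T) / c := div_nonneg (by linarith [hlt T le_rfl]) hc.le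
    linarith
  have hlin : u T + c * (t - T) ≤ u t :=
    image_le_of_deriv_right_le_deriv_boundary (f := fun s => u T + c * (s - T))
      (f' := fun _ => c) (by fun_prop)
      (fun s _ => by simpa using (((hasDerivAt_id s).sub_const T).const_mul c).const_add (u T)
        |>.hasDerivWithinAt)
      (by simp) (fun s hs => (hu s hs.1).continuousAt.continuousWithinAt)
      (fun s hs => (hu s hs.1).hasDerivWithinAt) (fun s hs => h s hs.1 (hlt s hs.1).le)
      (right_mem_Icc.2 hTt)
  have : c * (t - T) = a - u T + c := by
    simp only [t]; field_simp; ring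
  linarith [hlt t hTt]

theorem min_le_of_deriv_pos (hu : ∀ t ≥ T, HasDerivAt u (u' t) t)
    (h : ∀ t ≥ T, u t ≤ a → 0 < u' t) : ∀ t ≥ T, min (u T) a ≤ u t := fun _ ht =>
  image_le_of_deriv_right_lt_deriv_boundary' (f' := fun _ => 0) continuousOn_const
    (fun _ _ => hasDerivWithinAt_const _ _ _) (min_le_left _ _)
    (fun s hs => (hu s hs.1).continuousAt.continuousWithinAt)
    (fun s hs => (hu s hs.1).hasDerivWithinAt)
    (fun s hs hs' => h s hs.1 (hs' ▸ min_le_right _ _)) ⟨ht, le_rfl⟩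

theorem eventually_ge_of_deriv_ge_pos (hc : 0 < c)
    (hu : ∀ᶠ t in atTop, HasDerivAt u (u' t) t) (h : ∀ᶠ t in atTop, u t ≤ a → c ≤ u' t) :
    ∀ᶠ t in atTop, a ≤ u t := by
  obtain ⟨T, hT⟩ := eventually_atTop.1 (hu.and h)
  obtain ⟨t₀, ht₀, hat₀⟩ :=
    exists_ge_of_deriv_ge_pos hc (fun t ht => (hT t ht).1) (fun t ht => (hT t ht).2)
  refine eventually_atTop.2 ⟨t₀, fun t ht => ?_⟩
  have := min_le_of_deriv_pos (fun s hs => (hT s (ht₀.trans hs)).1)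
    (fun s hs hsa => hc.trans_le ((hT s (ht₀.trans hs)).2 hsa)) t ht
  rwa [min_eq_right hat₀] at this

theorem eventually_le_of_deriv_le_neg (hc : 0 < c)
    (hu : ∀ᶠ t in atTop, HasDerivAt u (u' t) t) (h : ∀ᶠ t in atTop, a ≤ u t → u' t ≤ -c) :
    ∀ᶠ t in atTop, u t ≤ a := by
  have := eventually_ge_of_deriv_ge_pos (u := -u) (u' := -u') (a := -a) hc
    (hu.mono fun t ht => ht.neg) (h.mono fun t ht hat => le_neg.1 (ht (neg_le_neg_iff.1 hat)))
  exact this.mono fun t ht => neg_le_neg_iff.1 ht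

theorem eventually_ge_of_deriv_ge_of_isCompact {x g : ℝ → ℝ} {K : Set ℝ}
    (hK : IsCompact K) (hg : ContinuousOn g K) (hgpos : ∀ y ∈ K, 0 < g y)
    (hu : ∀ᶠ t in atTop, HasDerivAt u (u' t) t)
    (h : ∀ᶠ t in atTop, u t ≤ a → x t ∈ K ∧ g (x t) ≤ u' t) :
    ∀ᶠ t in atTop, a ≤ u t := by
  obtain ⟨c, hc, hcg⟩ := hK.exists_forall_le' hg hgpos
  exact eventually_ge_of_deriv_ge_pos hc hu
    (h.mono fun t ht hat => (hcg _ (ht hat).1).trans (ht hat).2)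

end Trapping

section Decay

variable {u u' : ℝ → ℝ}

theorem eventually_le_of_deriv_le_sub_mul {B k a : ℝ} (hk : 0 < k) (ha : B < k * a)
    (hu : ∀ᶠ t in atTop, HasDerivAt u (u' t) t) (hle : ∀ᶠ t in atTop, u' t ≤ B - k * u t) :
    ∀ᶠ t in atTop, u t ≤ a :=
  eventually_le_of_deriv_le_neg (sub_pos.2 ha) hu
    (hle.mono fun t ht hat => by nlinarith)

theorem tendsto_zero_of_deriv_le_sub_mul {w : ℝ → ℝ} {k : ℝ} (hk : 0 < k)
    (hu₀ : ∀ᶠ t in atTop, 0 ≤ u t) (hu : ∀ᶠ t in atTop, HasDerivAt u (u' t) t)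
    (hle : ∀ᶠ t in atTop, u' t ≤ w t - k * u t) (hw : Tendsto w atTop (𝓝 0)) :
    Tendsto u atTop (𝓝 0) := by
  refine tendsto_nhds_of_forall_eventually_le_ge
    (fun a ha => hu₀.mono fun t ht => ha.le.trans ht) fun a ha => ?_
  have hw' : ∀ᶠ t in atTop, w t ≤ k * a / 4 := hw.eventually (ge_mem_nhds (by positivity))
  have := eventually_le_of_deriv_le_sub_mul (B := k * a / 4) (a := a / 2) hk (by nlinarith) hu
    ((hle.and hw').mono fun t ht => by linarith [ht.1, ht.2])
  exact this.mono fun t ht => by linarith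

end Decay

section BirthDeath

variable {b N N' P P' : ℝ → ℝ} {d bmax Nstar : ℝ}

theorem eventually_le_of_deriv_le_birth_sub_death (hd : 0 < d) (hNstar : 0 ≤ Nstar)
    (hb : ContinuousOn b (Ici 0)) (hbmax : ∀ x, 0 ≤ x → b x ≤ bmax)
    (hhigh : ∀ x, Nstar < x → b x < d * x) (hN₀ : ∀ᶠ t in atTop, 0 ≤ N t)
    (hN : ∀ᶠ t in atTop, HasDerivAt N (N' t) t)
    (hN' : ∀ᶠ t in atTop, N' t ≤ b (N t) - d * N t) {a : ℝ} (ha : Nstar < a) :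
    ∀ᶠ t in atTop, N t ≤ a := by
  set M := bmax / d + 1
  have hM : ∀ᶠ t in atTop, N t ≤ M :=
    eventually_le_of_deriv_le_sub_mul hd (by rw [mul_add, mul_div_cancel₀ _ hd.ne']; linarith) hN
      ((hN₀.and hN').mono fun t ht => by linarith [hbmax _ ht.1])
  have hK : Icc a M ⊆ Ici 0 := fun y hy => hNstar.trans (ha.trans_le hy.1).le
  have := eventually_ge_of_deriv_ge_of_isCompact (u := -N) (x := N) (a := -a)
    (g := fun y => d * y - b y) isCompact_Icc
    ((continuousOn_const.mul continuousOn_id).sub (hb.mono hK))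
    (fun y hy => sub_pos.2 (hhigh y (ha.trans_le hy.1))) (hN.mono fun t ht => ht.neg)
    ((hM.and hN').mono fun t ht hta =>
      ⟨⟨neg_le_neg_iff.1 hta, ht.1⟩, by linarith [ht.2]⟩)
  exact this.mono fun t ht => neg_le_neg_iff.1 ht

theorem exists_pos_eventually_le_of_deriv_ge_birth_sub_death (hNstar : 0 < Nstar)
    (hlow : ∀ x, 0 < x → x < Nstar → d * x < b x)
    (hP₀ : ∀ᶠ t in atTop, 0 < P t) (hPN : ∀ᶠ t in atTop, P t ≤ N t)
    (hNP : Tendsto (fun t => N t - P t) atTop (𝓝 0))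
    (hP : ∀ᶠ t in atTop, HasDerivAt P (P' t) t)
    (hP' : ∀ᶠ t in atTop, b (N t) - d * N t ≤ P' t) :
    ∃ m > 0, ∀ᶠ t in atTop, m ≤ N t := by
  have hgap : ∀ᶠ t in atTop, N t - P t < Nstar / 2 :=
    hNP.eventually (gt_mem_nhds (by positivity))
  obtain ⟨T, hT⟩ := eventually_atTop.1 (hP₀.and (hPN.and (hgap.and (hP.and hP'))))
  refine ⟨min (P T) (Nstar / 2), lt_min (hT T le_rfl).1 (by positivity),
    eventually_atTop.2 ⟨T, fun t ht => ?_⟩⟩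
  -- while `P ≤ N*/2`, the gap bound puts `N` in `(0, N*)`, where `b N > d N` pushes `P` up
  have hPt := min_le_of_deriv_pos (a := Nstar / 2) (fun s hs => (hT s hs).2.2.2.1)
    (fun s hs hPs => by
      obtain ⟨hPs₀, hPNs, hgaps, -, hP's⟩ := hT s hs
      linarith [hlow (N s) (by linarith) (by linarith)]) t ht
  exact hPt.trans (hT t ht).2.1

theorem eventually_ge_of_deriv_ge_birth_sub_death (hNstar : 0 < Nstar)
    (hb : ContinuousOn b (Ici 0)) (hlow : ∀ x, 0 < x → x < Nstar → d * x < b x)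
    (hP₀ : ∀ᶠ t in atTop, 0 < P t) (hPN : ∀ᶠ t in atTop, P t ≤ N t)
    (hNP : Tendsto (fun t => N t - P t) atTop (𝓝 0))
    (hP : ∀ᶠ t in atTop, HasDerivAt P (P' t) t)
    (hP' : ∀ᶠ t in atTop, b (N t) - d * N t ≤ P' t) {a : ℝ} (ha : a < Nstar) :
    ∀ᶠ t in atTop, a ≤ P t := by
  obtain ⟨m, hm, hmN⟩ :=
    exists_pos_eventually_le_of_deriv_ge_birth_sub_death hNstar hlow hP₀ hPN hNP hP hP'
  have hgap : ∀ᶠ t in atTop, N t - P t ≤ (Nstar - a) / 2 :=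
    hNP.eventually (ge_mem_nhds (by linarith))
  have hK : Icc m ((a + Nstar) / 2) ⊆ Ici 0 := fun y hy => hm.le.trans hy.1
  exact eventually_ge_of_deriv_ge_of_isCompact (x := N) (g := fun y => b y - d * y)
    isCompact_Icc ((hb.mono hK).sub (continuousOn_const.mul continuousOn_id))
    (fun y hy => sub_pos.2 (hlow y (hm.trans_le hy.1) (by linarith [hy.2]))) hP
    ((hmN.and (hgap.and hP')).mono fun t ht hPa => ⟨⟨ht.1, by linarith [ht.2.1]⟩, ht.2.2⟩)

end BirthDeath

theorem tendsto_total_population {b N I I' : ℝ → ℝ} {d dI k bmax Nstar : ℝ} (hd : 0 < d)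
    (hNstar : 0 < Nstar) (hdI : 0 ≤ dI) (hdIk : dI < k) (hb : ContinuousOn b (Ici 0))
    (hbmax : ∀ x, 0 ≤ x → b x ≤ bmax) (hlow : ∀ x, 0 < x → x < Nstar → d * x < b x)
    (hhigh : ∀ x, Nstar < x → b x < d * x)
    (hN₀ : ∀ᶠ t in atTop, 0 < N t) (hI₀ : ∀ᶠ t in atTop, 0 ≤ I t)
    (hIN : ∀ᶠ t in atTop, I t ≤ N t)
    (hN : ∀ᶠ t in atTop, HasDerivAt N (b (N t) - d * N t - dI * I t) t)
    (hI : ∀ᶠ t in atTop, HasDerivAt I (I' t) t) (hI' : ∀ᶠ t in atTop, I' t ≤ -k * I t)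
    (hIlim : Tendsto I atTop (𝓝 0)) :
    Tendsto N atTop (𝓝 Nstar) := by
  have hk : 0 < k := hdI.trans_lt hdIk
  set lam := dI / k
  have hlam₀ : 0 ≤ lam := div_nonneg hdI hk.le
  have hlam₁ : lam < 1 := (div_lt_one hk).2 hdIk
  have hlamk : lam * k = dI := div_mul_cancel₀ _ hk.ne'
  have hP : ∀ᶠ t in atTop, HasDerivAt (fun s => N s - lam * I s)
      (b (N t) - d * N t - dI * I t - lam * I' t) t :=
    (hN.and hI).mono fun t ht => ht.1.sub (ht.2.const_mul lam)
  have hP' : ∀ᶠ t in atTop, b (N t) - d * N t ≤ b (N t) - d * N t - dI * I t - lam * I' t :=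
    hI'.mono fun t ht => by
      linear_combination mul_le_mul_of_nonneg_left ht hlam₀ - I t * hlamk
  have hP₀ : ∀ᶠ t in atTop, 0 < N t - lam * I t :=
    ((hN₀.and hIN).and hI₀).mono fun t ht => by nlinarith [ht.1.1, ht.1.2, ht.2]
  have hPN : ∀ᶠ t in atTop, N t - lam * I t ≤ N t :=
    hI₀.mono fun t ht => by nlinarith
  have hNP : Tendsto (fun t => N t - (N t - lam * I t)) atTop (𝓝 0) := by
    simpa using hIlim.const_mul lam
  refine tendsto_nhds_of_forall_eventually_le_ge (fun a ha => ?_) fun a ha => ?_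
  · exact ((eventually_ge_of_deriv_ge_birth_sub_death hNstar hb hlow hP₀ hPN hNP hP hP'
      ha).and hPN).mono fun t ht => ht.1.trans ht.2
  · exact eventually_le_of_deriv_le_birth_sub_death hd hNstar.le hb hbmax hhigh
      (hN₀.mono fun t ht => ht.le) hN
      ((hN₀.and hI₀).mono fun t ht => by nlinarith [ht.2]) ha

theorem incidence_le {β S I R : ℝ} (hβ : 0 ≤ β) (hI : 0 ≤ I) (hR : 0 ≤ R)
    (hN : 0 < S + I + R) : β * S * I / (S + I + R) ≤ β * I := by
  rw [div_le_iff₀ hN]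
  nlinarith [mul_nonneg (mul_nonneg hβ hI) (add_nonneg hI hR)]

theorem stmt10_general (d β γ dI bplus : ℝ) (hd : 0 < d) (hβ : 0 ≤ β)
    (hdI : 0 ≤ dI) (hR0 : β < γ + d)
    (b : ℝ → ℝ) (hbC : ContDiffOn ℝ 1 b (Ici 0))
    (hbrange : ∀ N : ℝ, 0 ≤ N → b N ∈ Icc 0 bplus)
    (Nstar : ℝ) (hNstar : 0 < Nstar)
    (hlow : ∀ N : ℝ, 0 < N → N < Nstar → d * N < b N)
    (hhigh : ∀ N : ℝ, Nstar < N → b N < d * N)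
    (S I R : ℝ → ℝ)
    (hSpos : ∀ t, 0 ≤ t → 0 ≤ S t)
    (hIpos : ∀ t, 0 ≤ t → 0 ≤ I t)
    (hRpos : ∀ t, 0 ≤ t → 0 ≤ R t)
    (hNpos : ∀ t, 0 ≤ t → 0 < S t + I t + R t)
    (hIode : ∀ t, 0 ≤ t → HasDerivAt I
      (β * S t * I t / (S t + I t + R t) - (γ + d + dI) * I t) t)
    (R' : ℝ → ℝ)
    (hRderiv : ∀ t, 0 ≤ t → HasDerivAt R (R' t) t)
    (hRineq : ∀ t, 0 ≤ t → R' t ≤ γ * I t - d * R t)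
    (hNode : ∀ t, 0 ≤ t → HasDerivAt (fun s => S s + I s + R s)
      (b (S t + I t + R t) - d * (S t + I t + R t) - dI * I t) t) :
    Tendsto I atTop (nhds 0) ∧ Tendsto R atTop (nhds 0)
      ∧ Tendsto S atTop (nhds Nstar) := by
  have ev : ∀ {p : ℝ → Prop}, (∀ t, 0 ≤ t → p t) → ∀ᶠ t in atTop, p t :=
    fun h => eventually_atTop.2 ⟨0, h⟩
  have hk : dI < γ + d + dI - β := by linarith
  have hIdecay : ∀ t, 0 ≤ t → β * S t * I t / (S t + I t + R t) - (γ + d + dI) * I t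
      ≤ -(γ + d + dI - β) * I t := fun t ht => by
    linarith [incidence_le hβ (hIpos t ht) (hRpos t ht) (hNpos t ht)]
  have hI : Tendsto I atTop (𝓝 0) :=
    tendsto_zero_of_deriv_le_sub_mul (w := fun _ => 0) (hdI.trans_lt hk) (ev hIpos) (ev hIode)
      (ev fun t ht => by linarith [hIdecay t ht]) tendsto_const_nhds
  have hR : Tendsto R atTop (𝓝 0) :=
    tendsto_zero_of_deriv_le_sub_mul hd (ev hRpos) (ev hRderiv) (ev hRineq)
      (by simpa using hI.const_mul γ)
  have hN : Tendsto (fun t => S t + I t + R t) atTop (𝓝 Nstar) :=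
    tendsto_total_population hd hNstar hdI hk hbC.continuousOn (fun x hx => (hbrange x hx).2)
      hlow hhigh (ev hNpos) (ev hIpos) (ev fun t ht => by linarith [hSpos t ht, hRpos t ht])
      (ev hNode) (ev hIode) (ev hIdecay) hI
  refine ⟨hI, hR, ?_⟩
  simpa using ((hN.sub hI).sub hR).congr fun t => by ring

/-- Global asymptotic stability of the disease-free equilibrium `(N*, 0, 0)` of the
SIRS model when `R̃₀ = β/(γ+d) < 1`: every positive solution satisfies
`I(t) → 0`, `R(t) → 0` and `S(t) → N*`. -/
theorem stmt10 (d β γ dI bplus : ℝ) (hd : 0 < d) (hβ : 0 ≤ β) (hγ : 0 ≤ γ)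
    (hdI : 0 ≤ dI) (hR0 : β < γ + d)
    (b : ℝ → ℝ) (hbC : ContDiffOn ℝ 1 b (Ici 0)) (hbplus : 0 < bplus)
    (hbrange : ∀ N : ℝ, 0 ≤ N → b N ∈ Icc 0 bplus) (hb0 : b 0 = 0)
    (b0' : ℝ) (hb0deriv : HasDerivWithinAt b b0' (Ici 0) 0) (hb0' : d < b0')
    (Nstar : ℝ) (hNstar : 0 < Nstar)
    (hlow : ∀ N : ℝ, 0 < N → N < Nstar → d * N < b N)
    (hhigh : ∀ N : ℝ, Nstar < N → b N < d * N)
    (S I R : ℝ → ℝ)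
    (hSdiff : ∀ t, 0 ≤ t → DifferentiableAt ℝ S t)
    (hSpos : ∀ t, 0 ≤ t → 0 ≤ S t)
    (hIpos : ∀ t, 0 ≤ t → 0 ≤ I t)
    (hRpos : ∀ t, 0 ≤ t → 0 ≤ R t)
    (hNpos : ∀ t, 0 ≤ t → 0 < S t + I t + R t)
    (hI0 : 0 < I 0)
    (hIode : ∀ t, 0 ≤ t → HasDerivAt I
      (β * S t * I t / (S t + I t + R t) - (γ + d + dI) * I t) t)
    (R' : ℝ → ℝ)
    (hRderiv : ∀ t, 0 ≤ t → HasDerivAt R (R' t) t)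
    (hRineq : ∀ t, 0 ≤ t → R' t ≤ γ * I t - d * R t)
    (hNode : ∀ t, 0 ≤ t → HasDerivAt (fun s => S s + I s + R s)
      (b (S t + I t + R t) - d * (S t + I t + R t) - dI * I t) t) :
    Tendsto I atTop (nhds 0) ∧ Tendsto R atTop (nhds 0)
      ∧ Tendsto S atTop (nhds Nstar) :=
  stmt10_general d β γ dI bplus hd hβ hdI hR0 b hbC hbrange Nstar hNstar hlow hhigh S I R hSpos
    hIpos hRpos hNpos hIode R' hRderiv hRineq hNode
end

section
/- Let d > 0, β ≥ 0, γ > 0, d_I ≥ 0 with R₀ := β/(γ + d + d_I) < 1. Let b : [0,∞) → [0, b₊] be C¹ with b(0) = 0, and suppose there exists N* > 0 such that b(N) > dN for N ∈ (0, N*), b(N) < dN for N > N*, and b'(N*) < d. Then for every ε > 0 there exists δ > 0 with the following property: whenever S, I, R : [0,∞) → ℝ are differentiable nonnegative functions with N(t) := S(t) + I(t) + R(t) > 0, satisfying for all t ≥ 0 the equations I'(t) = β S(t) I(t)/N(t) − (γ + d + d_I) I(t), R'(t) ≤ γ I(t) − d R(t), N'(t) = b(N(t)) − d N(t) − d_I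 I(t), and whose initial data satisfy |S(0) − N*| < δ, I(0) < δ and R(0) < δ, one has |S(t) − N*| < ε, I(t) < ε and R(t) < ε for all t ≥ 0. -/
open Set Filter Topology

/-!
Every bound comes from one fencing argument: a function differentiable on `[0, ∞)` starting below a
level `M` stays below it provided its derivative is negative whenever it touches `M`.
Because `S ≤ N`, the incidence `βSI/N` is at most `βI`, so `R₀ < 1` makes `I' < 0` on the
level `I = δ`; then `R' ≤ γδ - dR` keeps `R` below `ε/4` once `γδ < dε/4`. The total
population is fenced above by any level beyond `N*`, where `b(N) < dN`, and below by a level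
`a < N*`, where the margin `b(a) - da > 0` beats the disease-induced loss `d_I I ≤ d_I δ`.
Finally `S = N - I - R` is squeezed between `a - δ - ε/4` and `N* + ε/4`.
-/

theorem image_le_of_deriv_neg_at_level {g g' : ℝ → ℝ} {M : ℝ}
    (hg : ∀ t, 0 ≤ t → HasDerivAt g (g' t) t) (h0 : g 0 ≤ M)
    (hM : ∀ t, 0 ≤ t → g t = M → g' t < 0) {t : ℝ} (ht : 0 ≤ t) : g t ≤ M :=
  image_le_of_deriv_right_lt_deriv_boundary (B := fun _ => M) (B' := 0)
    (fun s hs => (hg s hs.1).continuousAt.continuousWithinAt)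
    (fun s hs => (hg s hs.1).hasDerivWithinAt) h0 (fun _ => hasDerivAt_const _ M)
    (fun s hs => hM s hs.1) ⟨ht, le_rfl⟩

theorem le_image_of_deriv_pos_at_level {g g' : ℝ → ℝ} {a : ℝ}
    (hg : ∀ t, 0 ≤ t → HasDerivAt g (g' t) t) (h0 : a ≤ g 0)
    (ha : ∀ t, 0 ≤ t → g t = a → 0 < g' t) {t : ℝ} (ht : 0 ≤ t) : a ≤ g t :=
  image_le_of_deriv_right_lt_deriv_boundary' (f := fun _ => a) (f' := 0)
    continuousOn_const (fun _ _ => hasDerivWithinAt_const _ _ a) h0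
    (fun s hs => (hg s hs.1).continuousAt.continuousWithinAt)
    (fun s hs => (hg s hs.1).hasDerivWithinAt) (fun s hs hs' => ha s hs.1 hs'.symm)
    ⟨ht, le_rfl⟩

theorem eventually_mul_lt_nhdsGT (c : ℝ) {e : ℝ} (he : 0 < e) :
    ∀ᶠ δ in 𝓝[>] (0 : ℝ), c * δ < e :=
  (((continuous_const_mul c).tendsto' 0 0 (mul_zero c)).mono_left
    nhdsWithin_le_nhds).eventually_lt_const he

theorem standard_incidence_le {β S I N : ℝ} (hβ : 0 ≤ β) (hI : 0 ≤ I)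
    (hSN : S ≤ N) (hN : 0 < N) : β * S * I / N ≤ β * I := by
  rw [div_le_iff₀ hN]
  nlinarith [mul_nonneg hβ hI]

theorem infective_le {β Λ δ : ℝ} {S I R : ℝ → ℝ} (hβ : 0 ≤ β) (hβΛ : β < Λ) (hδ : 0 < δ)
    (hR : ∀ t, 0 ≤ t → 0 ≤ R t) (hN : ∀ t, 0 ≤ t → 0 < S t + I t + R t)
    (hI : ∀ t, 0 ≤ t → HasDerivAt I (β * S t * I t / (S t + I t + R t) - Λ * I t) t)
    (h0 : I 0 ≤ δ) {t : ℝ} (ht : 0 ≤ t) : I t ≤ δ := by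
  refine image_le_of_deriv_neg_at_level hI h0 (fun s hs hIs => ?_) ht
  have hSN : S s ≤ S s + I s + R s := by linarith [hR s hs]
  have := standard_incidence_le hβ (hIs ▸ hδ.le) hSN (hN s hs)
  nlinarith

theorem immune_le {γ d δ M : ℝ} {I R R' : ℝ → ℝ} (hγ : 0 ≤ γ)
    (hI : ∀ t, 0 ≤ t → I t ≤ δ) (hR : ∀ t, 0 ≤ t → HasDerivAt R (R' t) t)
    (hR' : ∀ t, 0 ≤ t → R' t ≤ γ * I t - d * R t) (hM : γ * δ < d * M) (h0 : R 0 ≤ M)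
    {t : ℝ} (ht : 0 ≤ t) : R t ≤ M := by
  refine image_le_of_deriv_neg_at_level hR h0 (fun s hs hRs => ?_) ht
  have hRs' := hR' s hs
  rw [hRs] at hRs'
  linarith [mul_le_mul_of_nonneg_left (hI s hs) hγ]

theorem population_le {b : ℝ → ℝ} {d dI Nstar M : ℝ} {N I : ℝ → ℝ} (hdI : 0 ≤ dI)
    (hhigh : ∀ N : ℝ, Nstar < N → b N < d * N) (hI : ∀ t, 0 ≤ t → 0 ≤ I t)
    (hN : ∀ t, 0 ≤ t → HasDerivAt N (b (N t) - d * N t - dI * I t) t)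
    (hM : Nstar < M) (h0 : N 0 ≤ M) {t : ℝ} (ht : 0 ≤ t) : N t ≤ M := by
  refine image_le_of_deriv_neg_at_level hN h0 (fun s hs hNs => ?_) ht
  have := hhigh (N s) (hNs ▸ hM)
  nlinarith [mul_nonneg hdI (hI s hs)]

theorem le_population {b : ℝ → ℝ} {d dI δ a : ℝ} {N I : ℝ → ℝ} (hdI : 0 ≤ dI)
    (hI : ∀ t, 0 ≤ t → I t ≤ δ)
    (hN : ∀ t, 0 ≤ t → HasDerivAt N (b (N t) - d * N t - dI * I t) t)
    (ha : dI * δ < b a - d * a) (h0 : a ≤ N 0) {t : ℝ} (ht : 0 ≤ t) : a ≤ N t := by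
  refine le_image_of_deriv_pos_at_level hN h0 (fun s hs hNs => ?_) ht
  have := mul_le_mul_of_nonneg_left (hI s hs) hdI
  rw [hNs]
  linarith

theorem stmt11_general (d β γ dI : ℝ) (hd : 0 < d) (hβ : 0 ≤ β) (hγ : 0 < γ)
    (hdI : 0 ≤ dI) (hR0 : β / (γ + d + dI) < 1)
    (b : ℝ → ℝ) (Nstar : ℝ) (hNstar : 0 < Nstar)
    (hlow : ∀ N : ℝ, 0 < N → N < Nstar → d * N < b N)
    (hhigh : ∀ N : ℝ, Nstar < N → b N < d * N) :
    ∀ ε : ℝ, 0 < ε → ∃ δ : ℝ, 0 < δ ∧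
      ∀ S I R : ℝ → ℝ, ∀ R' : ℝ → ℝ,
        (∀ t, 0 ≤ t → DifferentiableAt ℝ S t) →
        (∀ t, 0 ≤ t → 0 ≤ S t) →
        (∀ t, 0 ≤ t → 0 ≤ I t) →
        (∀ t, 0 ≤ t → 0 ≤ R t) →
        (∀ t, 0 ≤ t → 0 < S t + I t + R t) →
        (∀ t, 0 ≤ t → HasDerivAt I
          (β * S t * I t / (S t + I t + R t) - (γ + d + dI) * I t) t) →
        (∀ t, 0 ≤ t → HasDerivAt R (R' t) t) →
        (∀ t, 0 ≤ t → R' t ≤ γ * I t - d * R t) →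
        (∀ t, 0 ≤ t → HasDerivAt (fun s => S s + I s + R s)
          (b (S t + I t + R t) - d * (S t + I t + R t) - dI * I t) t) →
        |S 0 - Nstar| < δ → I 0 < δ → R 0 < δ →
        ∀ t, 0 ≤ t → |S t - Nstar| < ε ∧ I t < ε ∧ R t < ε := by
  intro ε hε
  have hβΛ : β < γ + d + dI := by rwa [div_lt_one (by linarith)] at hR0
  set a := max (Nstar - ε / 4) (Nstar / 2)
  have haε : Nstar - ε / 4 ≤ a := le_max_left _ _
  have haN : a < Nstar := max_lt (by linarith) (by linarith)
  have hba := hlow a (lt_max_of_lt_right (half_pos hNstar)) haN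
  obtain ⟨δ, ⟨hδ, hδa⟩, hδε, hδb, hδγ⟩ : ∃ δ, δ ∈ Ioo 0 (Nstar - a) ∧ 12 * δ < ε ∧
      dI * δ < b a - d * a ∧ γ * δ < d * (ε / 4) := by
    refine Eventually.exists (f := 𝓝[>] (0 : ℝ)) ?_
    filter_upwards [Ioo_mem_nhdsGT (sub_pos.2 haN), eventually_mul_lt_nhdsGT 12 hε,
      eventually_mul_lt_nhdsGT dI (sub_pos.2 hba),
      eventually_mul_lt_nhdsGT γ (by positivity : 0 < d * (ε / 4))] with δ h1 h2 h3 h4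
    exact ⟨h1, h2, h3, h4⟩
  refine ⟨δ, hδ, fun S I R R' _ _ hI hR hN hI' hR' hR'le hN' hS0 hI0 hR0 t ht => ?_⟩
  have hS0' := abs_lt.1 hS0
  have hIδ : ∀ t, 0 ≤ t → I t ≤ δ := fun t ht => infective_le hβ hβΛ hδ hR hN hI' hI0.le ht
  have hRt : R t ≤ ε / 4 := immune_le hγ.le hIδ hR' hR'le hδγ (by linarith) ht
  have hup : S t + I t + R t ≤ Nstar + ε / 4 :=
    population_le (N := fun s => S s + I s + R s) hdI hhigh hI hN' (by linarith)
      (by linarith [hI 0 le_rfl, hR 0 le_rfl]) ht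
  have hlo : a ≤ S t + I t + R t :=
    le_population (N := fun s => S s + I s + R s) hdI hIδ hN' hδb
      (by linarith [hI 0 le_rfl, hR 0 le_rfl]) ht
  have hIt := hIδ t ht
  exact ⟨abs_lt.2 ⟨by linarith [hI t ht, hR t ht], by linarith [hI t ht, hR t ht]⟩,
    by linarith, by linarith⟩

/-- Local stability of the disease-free equilibrium `(N*, 0, 0)` when
`R₀ = β/(γ+d+d_I) < 1`: for every `ε > 0` there is `δ > 0` such that every
nonnegative solution with initial data `δ`-close to the DFE stays `ε`-close to it
for all times. -/
theorem stmt11 (d β γ dI bplus : ℝ) (hd : 0 < d) (hβ : 0 ≤ β) (hγ : 0 < γ)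
    (hdI : 0 ≤ dI) (hR0 : β / (γ + d + dI) < 1)
    (b : ℝ → ℝ) (hbC : ContDiffOn ℝ 1 b (Ici 0)) (hbplus : 0 < bplus)
    (hbrange : ∀ N : ℝ, 0 ≤ N → b N ∈ Icc 0 bplus) (hb0 : b 0 = 0)
    (Nstar : ℝ) (hNstar : 0 < Nstar)
    (hlow : ∀ N : ℝ, 0 < N → N < Nstar → d * N < b N)
    (hhigh : ∀ N : ℝ, Nstar < N → b N < d * N)
    (bN' : ℝ) (hbN'deriv : HasDerivWithinAt b bN' (Ici 0) Nstar) (hbN' : bN' < d) :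
    ∀ ε : ℝ, 0 < ε → ∃ δ : ℝ, 0 < δ ∧
      ∀ S I R : ℝ → ℝ, ∀ R' : ℝ → ℝ,
        (∀ t, 0 ≤ t → DifferentiableAt ℝ S t) →
        (∀ t, 0 ≤ t → 0 ≤ S t) →
        (∀ t, 0 ≤ t → 0 ≤ I t) →
        (∀ t, 0 ≤ t → 0 ≤ R t) →
        (∀ t, 0 ≤ t → 0 < S t + I t + R t) →
        (∀ t, 0 ≤ t → HasDerivAt I
          (β * S t * I t / (S t + I t + R t) - (γ + d + dI) * I t) t) →
        (∀ t, 0 ≤ t → HasDerivAt R (R' t) t) →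
        (∀ t, 0 ≤ t → R' t ≤ γ * I t - d * R t) →
        (∀ t, 0 ≤ t → HasDerivAt (fun s => S s + I s + R s)
          (b (S t + I t + R t) - d * (S t + I t + R t) - dI * I t) t) →
        |S 0 - Nstar| < δ → I 0 < δ → R 0 < δ →
        ∀ t, 0 ≤ t → |S t - Nstar| < ε ∧ I t < ε ∧ R t < ε :=
  stmt11_general d β γ dI hd hβ hγ hdI hR0 b Nstar hNstar hlow hhigh
end

section
/- Let d > 0, d_I ≥ 0, and let b : [0,∞) → [0, b₊] be C¹ with b(0) = 0, and suppose there exists N* > 0 such that b(N) > dN for N ∈ (0, N*) and b(N) < dN for N > N*. Let I : [0,∞) → ℝ be continuous with I(t) ≥ 0 for all t and I(t) → 0 as t → ∞, and let N : [0,∞) → ℝ be differentiable and bounded with N'(t) = b(N(t)) − d N(t) − d_I I(t) for all t ≥ 0 and liminf_{t→∞} N(t) > 0. Then N(t) → N* as t → ∞. -/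
open Set Filter Real Topology

lemma barrier_aux (g g' : ℝ → ℝ) (c m T : ℝ) (hm : 0 < m)
    (hderiv : ∀ t, T ≤ t → HasDerivAt g (g' t) t)
    (hdec : ∀ t, T ≤ t → c ≤ g t → g' t ≤ -m) :
    ∀ᶠ t in atTop, g t < c := by
  -- Step (a): find a time where g dips below c
  have ha : ∃ t₀, T ≤ t₀ ∧ g t₀ < c := by
    by_contra h
    push_neg at h
    have hanti : AntitoneOn (fun t => g t + m * t) (Ici T) := by
      apply antitoneOn_of_deriv_nonpos (convex_Ici T)
      · intro t ht
        exact ((hderiv t ht).add ((hasDerivAt_id t).const_mul m)).continuousAt.continuousWithinAt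
      · intro t ht
        rw [interior_Ici] at ht
        exact ((hderiv t ht.le).add
          ((hasDerivAt_id t).const_mul m)).differentiableAt.differentiableWithinAt
      · intro t ht
        rw [interior_Ici] at ht
        have hD : HasDerivAt (fun t => g t + m * t) (g' t + m * 1) t :=
          (hderiv t ht.le).add ((hasDerivAt_id t).const_mul m)
        rw [hD.deriv]
        have := hdec t ht.le (h t ht.le)
        linarith
    set t₁ := max T ((g T + m * T - c) / m + 1) with ht₁def
    have hTt₁ : T ≤ t₁ := le_max_left _ _
    have h1 : (g T + m * T - c) / m + 1 ≤ t₁ := le_max_right _ _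
    have h2 : g t₁ + m * t₁ ≤ g T + m * T := hanti self_mem_Ici hTt₁ hTt₁
    have h3 : g T + m * T - c ≤ m * ((g T + m * T - c) / m) := by
      rw [mul_div_cancel₀ _ hm.ne']
    have h4 : m * ((g T + m * T - c) / m + 1) ≤ m * t₁ := by
      exact mul_le_mul_of_nonneg_left h1 hm.le
    have : g t₁ < c := by nlinarith
    exact absurd (h t₁ hTt₁) (not_le.2 this)
  obtain ⟨t₀, hTt₀, hgt₀⟩ := ha
  rw [eventually_atTop]
  refine ⟨t₀, fun t₁ ht₁ => ?_⟩
  by_contra hc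
  push_neg at hc
  have ht₀₁ : t₀ < t₁ := lt_of_le_of_ne ht₁ (by rintro rfl; exact absurd hc (not_le.2 hgt₀))
  set A := {t ∈ Icc t₀ t₁ | c ≤ g t} with hAdef
  have hgc : ContinuousOn g (Icc t₀ t₁) := fun t ht =>
    ((hderiv t (hTt₀.trans ht.1)).continuousAt).continuousWithinAt
  have hAclosed : IsClosed A := by
    have : A = Icc t₀ t₁ ∩ g ⁻¹' (Ici c) := by
      ext t; simp [hAdef, and_comm]
    rw [this]
    exact hgc.preimage_isClosed_of_isClosed isClosed_Icc isClosed_Ici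
  have hAne : A.Nonempty := ⟨t₁, ⟨ht₁, le_refl t₁⟩, hc⟩
  have hAbdd : BddBelow A := ⟨t₀, fun t ht => ht.1.1⟩
  set s := sInf A with hsdef
  have hsA : s ∈ A := hAclosed.csInf_mem hAne hAbdd
  have hs0 : t₀ < s := hsA.1.1.lt_of_ne fun h => absurd hsA.2 (by rw [← h]; exact not_le.2 hgt₀)
  have hlt : ∀ t ∈ Ioo t₀ s, g t < c := by
    intro t ht
    by_contra h
    push_neg at h
    have : t ∈ A := ⟨⟨ht.1.le, ht.2.le.trans hsA.1.2⟩, h⟩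
    exact absurd (csInf_le hAbdd this) (not_le.2 ht.2)
  have hs' : HasDerivAt g (g' s) s := hderiv s (hTt₀.trans hsA.1.1)
  have htend : Tendsto (slope g s) (𝓝[≠] s) (𝓝 (g' s)) :=
    hasDerivAt_iff_tendsto_slope.mp hs'
  have hmono : 𝓝[Ioo t₀ s] s ≤ 𝓝[≠] s :=
    nhdsWithin_mono s (fun x hx => ne_of_lt hx.2)
  haveI : (𝓝[Ioo t₀ s] s).NeBot := right_nhdsWithin_Ioo_neBot hs0
  have hge : 0 ≤ g' s := by
    refine ge_of_tendsto (htend.mono_left hmono) ?_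
    filter_upwards [self_mem_nhdsWithin] with t ht
    have h1 : g t < c := hlt t ht
    have h2 : g t - g s < 0 := by linarith [hsA.2]
    have h3 : t - s < 0 := sub_neg.2 ht.2
    rw [slope_def_field]
    exact (div_pos_of_neg_of_neg h2 h3).le
  have hle : g' s ≤ -m := hdec s (hTt₀.trans hsA.1.1) hsA.2
  linarith


/-- Fluctuation-lemma step in the global stability proof: if the infectives vanish
in the limit and the total population `N`, satisfying `N' = b(N) − dN − d_I I`, is
bounded and persistent (`liminf N > 0`), then `N(t) → N*`. -/
theorem stmt19 (d dI bplus : ℝ) (hd : 0 < d) (hdI : 0 ≤ dI) (hbplus : 0 < bplus)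
    (b : ℝ → ℝ) (hbC : ContDiffOn ℝ 1 b (Ici 0))
    (hbrange : ∀ N : ℝ, 0 ≤ N → b N ∈ Icc 0 bplus) (hb0 : b 0 = 0)
    (Nstar : ℝ) (hNstar : 0 < Nstar)
    (hlow : ∀ N : ℝ, 0 < N → N < Nstar → d * N < b N)
    (hhigh : ∀ N : ℝ, Nstar < N → b N < d * N)
    (I : ℝ → ℝ) (hIc : ContinuousOn I (Ici 0))
    (hIpos : ∀ t, 0 ≤ t → 0 ≤ I t)
    (hIlim : Tendsto I atTop (nhds 0))
    (N : ℝ → ℝ) (M : ℝ) (hNbdd : ∀ t, 0 ≤ t → |N t| ≤ M)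
    (hNode : ∀ t, 0 ≤ t → HasDerivAt N (b (N t) - d * N t - dI * I t) t)
    (hliminf : 0 < Filter.liminf N Filter.atTop) :
    Tendsto N atTop (nhds Nstar) := by
  have hfc : ContinuousOn (fun x => b x - d * x) (Ici 0) :=
    hbC.continuousOn.sub (continuous_const.mul continuous_id).continuousOn
  have hNle : ∀ t, 0 ≤ t → N t ≤ M := fun t ht => (le_abs_self _).trans (hNbdd t ht)
  have hNge : ∀ t, 0 ≤ t → -M ≤ N t := fun t ht => (abs_le.1 (hNbdd t ht)).1
  -- upper bound
  have hupper : ∀ ε > (0:ℝ), ∀ᶠ t in atTop, N t < Nstar + ε := by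
    intro ε hε
    have hKne : (Icc (Nstar + ε) (max M (Nstar + ε))).Nonempty :=
      ⟨Nstar + ε, le_refl _, le_max_right _ _⟩
    have hKsub : Icc (Nstar + ε) (max M (Nstar + ε)) ⊆ Ici 0 := fun x hx =>
      le_trans (by positivity) hx.1
    obtain ⟨x₀, hx₀K, hmax⟩ := isCompact_Icc.exists_isMaxOn hKne (hfc.mono hKsub)
    have hm : 0 < -(b x₀ - d * x₀) := by
      have := hhigh x₀ (lt_of_lt_of_le (lt_add_of_pos_right Nstar hε) hx₀K.1)
      linarith
    apply barrier_aux N (fun t => b (N t) - d * N t - dI * I t) (Nstar + ε)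
      (-(b x₀ - d * x₀)) 0 hm hNode
    intro t ht hc
    have hNt : N t ∈ Icc (Nstar + ε) (max M (Nstar + ε)) :=
      ⟨hc, (hNle t ht).trans (le_max_left _ _)⟩
    have h1 : b (N t) - d * N t ≤ b x₀ - d * x₀ := hmax hNt
    have h2 : 0 ≤ dI * I t := mul_nonneg hdI (hIpos t ht)
    linarith
  -- lower bound
  have hbddlow : IsBoundedUnder (· ≥ ·) atTop N :=
    isBoundedUnder_of_eventually_ge (a := -M)
      ((eventually_ge_atTop 0).mono fun t ht => hNge t ht)
  set L0 := liminf N atTop with hL0def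
  have hL : ∀ᶠ t in atTop, L0 / 2 < N t :=
    eventually_lt_of_lt_liminf (by rw [← hL0def]; linarith) hbddlow
  have hlower : ∀ a, a < Nstar → ∀ᶠ t in atTop, a < N t := by
    intro a ha
    set c := Nstar - min (Nstar - a) (Nstar / 2) with hcdef
    have hca : a ≤ c := by
      have := min_le_left (Nstar - a) (Nstar / 2); simp only [hcdef]; linarith
    have hc0 : 0 < c := by
      have := min_le_right (Nstar - a) (Nstar / 2); simp only [hcdef]; linarith
    have hcN : c < Nstar := by
      have : 0 < min (Nstar - a) (Nstar / 2) := lt_min (by linarith) (by linarith)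
      simp only [hcdef]; linarith
    have hl0 : 0 < min (L0 / 2) c := lt_min (by linarith) hc0
    have hKsub : Icc (min (L0 / 2) c) c ⊆ Ici 0 := fun x hx => hl0.le.trans hx.1
    have hKne : (Icc (min (L0 / 2) c) c).Nonempty := ⟨c, min_le_right _ _, le_rfl⟩
    obtain ⟨x₀, hx₀K, hmin⟩ := isCompact_Icc.exists_isMinOn hKne (hfc.mono hKsub)
    have hm : 0 < b x₀ - d * x₀ := by
      have := hlow x₀ (hl0.trans_le hx₀K.1) (lt_of_le_of_lt hx₀K.2 hcN)
      linarith
    have hI2 : ∀ᶠ t in atTop, dI * I t < (b x₀ - d * x₀) / 2 := by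
      have h : Tendsto (fun t => dI * I t) atTop (𝓝 (dI * 0)) := hIlim.const_mul dI
      rw [mul_zero] at h
      exact h.eventually_lt_const (by positivity)
    have hEv : ∀ᶠ t in atTop, (L0 / 2 < N t ∧ dI * I t < (b x₀ - d * x₀) / 2) ∧ 0 ≤ t :=
      (hL.and hI2).and (eventually_ge_atTop 0)
    obtain ⟨T₀, hT₀⟩ := eventually_atTop.1 hEv
    have hbar := barrier_aux (fun t => -N t)
      (fun t => -(b (N t) - d * N t - dI * I t)) (-c) ((b x₀ - d * x₀) / 2) T₀
      (half_pos hm)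
      (fun t ht => (hNode t (hT₀ t ht).2).neg)
      ?_
    · filter_upwards [hbar] with t ht
      simp only [neg_lt_neg_iff] at ht
      linarith
    · intro t ht hc'
      obtain ⟨⟨h1, h2⟩, h3⟩ := hT₀ t ht
      have hNc : N t ≤ c := by linarith [neg_le_neg_iff.1 hc']
      have hNt : N t ∈ Icc (min (L0 / 2) c) c :=
        ⟨(min_le_left _ _).trans h1.le, hNc⟩
      have h4 : b x₀ - d * x₀ ≤ b (N t) - d * N t := hmin hNt
      linarith
  rw [tendsto_order]
  constructor
  · intro a ha; exact hlower a ha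
  · intro b' hb'
    filter_upwards [hupper (b' - Nstar) (by linarith)] with t ht
    linarith
end
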